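/- The elliptic curve E₁ : y² = x³ − x² + x has exactly four rational points: the point at infinity and the affine points (0,0), (1,1), (1,−1). In particular, E₁(ℚ) is finite (Mordell–Weil rank 0) and is cyclic of order 4. -/

import Mathlib

noncomputable section

/-- The elliptic curve `E₁ : y² = x³ - x² + x` over `ℚ`. -/
def E₁ : WeierstrassCurve ℚ := ⟨0, -1, 0, 1, 0⟩

/-!
Write `x = a / b` in lowest terms with `b > 0`. Then `(b² y)² = b · a · (a² - ab + b²)` with
pairwise coprime factors, so `a = α²`, `b = β²` and `α⁴ - α²β² + β⁴` is a square.

The key fact is that a primitive pair with `f² + c²` and `f² + 4c²` both squares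
(Euler's concordant forms for `(1, 4)`) has `c = 0`. This is Fermat descent on `|c|`: the
Pythagorean parametrisation `f = m² - n²`, `c = 2mn` makes `m⁴ + 14m²n² + n⁴` a square `t²`, and
splitting `(m² + 7n²)² - t² = 48n⁴` into coprime halves produces a new pair with
`|c'| ≤ |n| < |c|`. The quartic `α⁴ - α²β² + β⁴ = □` reduces to the same problems: for odd `α, β`
it becomes `p⁴ + 14p²q² + q⁴ = □` with `α, β = p ± q`, and for even `β` the same kind of splitting
yields a concordant pair directly. Hence `x ∈ {0, 1}`, and every point is a multiple of `(1, 1)`,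
which has order 4.
-/

namespace Int

theorem eq_pow_of_mul_eq_pow_of_nonneg_left {a b c : ℤ} {k : ℕ} (hab : IsCoprime a b)
    (ha : 0 ≤ a) (h : a * b = c ^ k) : ∃ d, a = d ^ k := by
  obtain ⟨d, hd⟩ := exists_associated_pow_of_mul_eq_pow' hab h
  refine ⟨|d|, ?_⟩
  have := congrArg ((↑) : ℕ → ℤ) (Int.associated_iff_natAbs.mp hd)
  rwa [Int.natCast_natAbs, Int.natCast_natAbs, abs_pow, abs_of_nonneg ha, eq_comm] at this

theorem exists_eq_pow_four_of_mul_eq_pow_four {a b n : ℤ} (hab : IsCoprime a b) (ha : 0 ≤ a)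
    (hb : 0 ≤ b) (h : a * b = n ^ 4) :
    ∃ c d, a = c ^ 4 ∧ b = d ^ 4 ∧ IsCoprime c d ∧ n ^ 2 = c ^ 2 * d ^ 2 := by
  obtain ⟨c, rfl⟩ := eq_pow_of_mul_eq_pow_of_nonneg_left hab ha h
  obtain ⟨d, rfl⟩ := eq_pow_of_mul_eq_pow_of_nonneg_left hab.symm hb (by rw [mul_comm, h])
  refine ⟨c, d, rfl, rfl, (IsCoprime.pow_iff four_pos four_pos).mp hab, ?_⟩
  exact (sq_eq_sq₀ (by positivity) (by positivity)).mp (by linear_combination h.symm)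

theorem three_dvd_of_three_dvd_sq_add_sq {a b : ℤ} (h : 3 ∣ a ^ 2 + b ^ 2) :
    3 ∣ a ∧ 3 ∣ b := by
  have key : ∀ x y : ZMod 3, x ^ 2 + y ^ 2 = 0 → x = 0 ∧ y = 0 := by decide
  have h3 := (ZMod.intCast_zmod_eq_zero_iff_dvd (a ^ 2 + b ^ 2) 3).mpr (mod_cast h)
  push_cast at h3
  obtain ⟨ha, hb⟩ := key _ _ h3
  exact ⟨mod_cast (ZMod.intCast_zmod_eq_zero_iff_dvd a 3).mp ha,
    mod_cast (ZMod.intCast_zmod_eq_zero_iff_dvd b 3).mp hb⟩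

theorem not_three_dvd_sq_add_sq {a b : ℤ} (hab : IsCoprime a b) : ¬ 3 ∣ a ^ 2 + b ^ 2 := by
  intro h
  obtain ⟨ha, hb⟩ := three_dvd_of_three_dvd_sq_add_sq h
  exact Int.prime_three.not_isUnit (hab.isUnit_of_dvd' ha hb)

end Int

theorem IsCoprime.of_mul_add_mul_eq {R : Type*} [CommRing R] {a b k x y : R}
    (hk : IsCoprime k b) (h : x * a + y * b = k) : IsCoprime a b := by
  obtain ⟨s, t, hst⟩ := hk
  exact ⟨s * x, s * y + t, by linear_combination s * h + hst⟩

theorem exists_add_eq_of_mul_eq_twelve_mul_pow_four {g h n : ℤ} (hgh : IsCoprime g h)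
    (hg : 0 < g) (hh : 0 < h) (hprod : g * h = 12 * n ^ 4) :
    ∃ c d, IsCoprime c d ∧ n ^ 2 = c ^ 2 * d ^ 2 ∧
      (g + h = 12 * c ^ 4 + d ^ 4 ∨ g + h = 4 * c ^ 4 + 3 * d ^ 4) := by
  wlog h2g : 2 ∣ g generalizing g h
  · have h2h : 2 ∣ h :=
      (Int.prime_two.dvd_or_dvd ⟨6 * n ^ 4, by rw [hprod]; ring⟩).resolve_left h2g
    simpa only [add_comm h] using this hgh.symm hh hg (by rw [mul_comm, hprod]) h2h
  have h4g : 4 ∣ g :=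
    ((hgh.of_isCoprime_of_dvd_left h2g).pow_left (m := 2)).dvd_of_dvd_mul_right
      ⟨3 * n ^ 4, by rw [hprod]; ring⟩
  rcases Int.prime_three.dvd_or_dvd ⟨4 * n ^ 4, by rw [hprod]; ring⟩ with h3g | h3h
  · have h43 : IsCoprime (4 : ℤ) 3 := by norm_num [Int.isCoprime_iff_gcd_eq_one]
    obtain ⟨g', rfl⟩ := h43.mul_dvd h4g h3g
    obtain ⟨c, d, rfl, rfl, hcd, hn⟩ := Int.exists_eq_pow_four_of_mul_eq_pow_four
      hgh.of_mul_left_right (by linarith) hh.le (by linarith)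
    exact ⟨c, d, hcd, hn, Or.inl (by ring)⟩
  · obtain ⟨g', rfl⟩ := h4g
    obtain ⟨h', rfl⟩ := h3h
    obtain ⟨c, d, rfl, rfl, hcd, hn⟩ := Int.exists_eq_pow_four_of_mul_eq_pow_four
      hgh.of_mul_left_right.of_mul_right_right (by linarith) (by linarith) (by linarith)
    exact ⟨c, d, hcd, hn, Or.inr rfl⟩

theorem exists_sq_eq_quartic_of_concordant {f c e d : ℤ} (hf : Odd f) (hfc : IsCoprime f c)
    (he : f ^ 2 + c ^ 2 = e ^ 2) (hd : f ^ 2 + 4 * c ^ 2 = d ^ 2) :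
    ∃ m n : ℤ, IsCoprime m n ∧ Odd m ∧ Even n ∧ c = 2 * m * n ∧
      d ^ 2 = m ^ 4 + 14 * m ^ 2 * n ^ 2 + n ^ 4 := by
  have hpyth : PythagoreanTriple f c e := by
    unfold PythagoreanTriple; linear_combination he
  obtain ⟨m, n, hfc', -, hmn, hpar⟩ :=
    PythagoreanTriple.coprime_classification.mp ⟨hpyth, Int.isCoprime_iff_gcd_eq_one.mp hfc⟩
  obtain ⟨rfl, rfl⟩ : f = m ^ 2 - n ^ 2 ∧ c = 2 * m * n := by
    refine hfc'.resolve_right fun ⟨hf2, _⟩ => ?_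
    exact Int.not_even_iff_odd.mpr hf ⟨m * n, by rw [hf2]; ring⟩
  have hmn' : IsCoprime m n := Int.isCoprime_iff_gcd_eq_one.mpr hmn
  have hd' : d ^ 2 = m ^ 4 + 14 * m ^ 2 * n ^ 2 + n ^ 4 := by linear_combination -hd
  rcases hpar with ⟨hm, hn⟩ | ⟨hm, hn⟩
  · exact ⟨n, m, hmn'.symm, Int.odd_iff.mpr hn, Int.even_iff.mpr hm, by ring,
      by linear_combination hd'⟩
  · exact ⟨m, n, hmn', Int.odd_iff.mpr hm, Int.even_iff.mpr hn, rfl, hd'⟩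

theorem exists_sum_eq_of_sq_eq_quartic {p q t : ℤ} (hpq : IsCoprime p q) (hp : Odd p)
    (hq : Even q) (hq0 : q ≠ 0) (ht : t ^ 2 = p ^ 4 + 14 * p ^ 2 * q ^ 2 + q ^ 4) :
    ∃ c d, IsCoprime c d ∧ q ^ 2 = c ^ 2 * d ^ 2 ∧
      p ^ 2 + 7 * q ^ 2 = 12 * c ^ 4 + d ^ 4 := by
  have hM_odd : Odd (p ^ 2 + 7 * q ^ 2) := by simp [parity_simps, hp, hq]
  have ht_odd : Odd t :=
    (Int.odd_pow' two_ne_zero).mp (by rw [ht]; simp [parity_simps, hp, hq])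
  obtain ⟨g, hg⟩ := hM_odd.sub_odd ht_odd
  obtain ⟨h, hh⟩ : ∃ h, h = p ^ 2 + 7 * q ^ 2 - g := ⟨_, rfl⟩
  have hsum : g + h = p ^ 2 + 7 * q ^ 2 := by linarith
  have hprod : g * h = 12 * q ^ 4 := by
    have : 4 * (g * h) = 4 * (12 * q ^ 4) := by
      rw [hh]; linear_combination (-1 : ℤ) * ht - (t + p ^ 2 + 7 * q ^ 2 - 2 * g) * hg
    linarith
  have hgh : IsCoprime g h := by
    have hMq : IsCoprime (p ^ 2 + 7 * q ^ 2) q := by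
      simpa only [mul_assoc, ← sq] using (hpq.pow_left (m := 2)).add_mul_right_left (7 * q)
    have hM3 : IsCoprime (p ^ 2 + 7 * q ^ 2) 3 := by
      refine ((Int.prime_three.coprime_iff_not_dvd).mpr fun h3 => ?_).symm
      exact Int.not_three_dvd_sq_add_sq hpq
        (by rw [show p ^ 2 + q ^ 2 = p ^ 2 + 7 * q ^ 2 - 3 * (2 * q ^ 2) by ring]
            exact dvd_sub h3 (dvd_mul_right _ _))
    have hM12 : IsCoprime (g + h) (g * h) := by
      rw [hsum, hprod, show (12 : ℤ) = 2 ^ 2 * 3 by norm_num]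
      exact ((Int.isCoprime_two_right.mpr hM_odd).pow_right.mul_right hM3).mul_right hMq.pow_right
    obtain ⟨a, b, hab⟩ := hM12
    exact ⟨a, a + b * g, by linear_combination hab⟩
  have hg0 : 0 < g ∧ 0 < h := by
    have hM0 : 0 < p ^ 2 + 7 * q ^ 2 := by positivity
    rcases pos_and_pos_or_neg_and_neg_of_mul_pos (hprod ▸ by positivity : 0 < g * h) with h' | h'
    · exact h'
    · linarith
  obtain ⟨c, d, hcd, hqcd, hcases⟩ :=
    exists_add_eq_of_mul_eq_twelve_mul_pow_four hgh hg0.1 hg0.2 hprod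
  refine ⟨c, d, hcd, hqcd, ?_⟩
  rw [← hsum]
  refine hcases.resolve_right fun hB => ?_
  obtain ⟨a, rfl⟩ := hp
  obtain ⟨b, rfl⟩ := hq
  have key : ∀ a b c d : ZMod 4, (2 * a + 1) ^ 2 + 7 * (b + b) ^ 2 ≠ 4 * c ^ 4 + 3 * d ^ 4 := by
    decide
  exact key a b c d (by exact_mod_cast congrArg ((↑) : ℤ → ZMod 4) (hsum.symm.trans hB))

theorem exists_concordant_of_sq_eq_quartic {p q t : ℤ} (hpq : IsCoprime p q) (hp : Odd p)
    (hq : Even q) (hq0 : q ≠ 0) (ht : t ^ 2 = p ^ 4 + 14 * p ^ 2 * q ^ 2 + q ^ 4) :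
    ∃ f c e d : ℤ, Odd f ∧ IsCoprime f c ∧ c ≠ 0 ∧ c.natAbs ≤ q.natAbs ∧
      f ^ 2 + c ^ 2 = e ^ 2 ∧ f ^ 2 + 4 * c ^ 2 = d ^ 2 := by
  obtain ⟨c, d, hcd, hqcd, hsum⟩ := exists_sum_eq_of_sq_eq_quartic hpq hp hq hq0 ht
  have hd : Odd d := by
    have : Odd (12 * c ^ 4 + d ^ 4) := by rw [← hsum]; simp [parity_simps, hp, hq]
    simpa [parity_simps, Int.odd_mul, show ¬ Odd (12 : ℤ) by decide] using this
  have hp2 : (d ^ 2 - 3 * c ^ 2) * (d ^ 2 - 4 * c ^ 2) = p ^ 2 := by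
    linear_combination -hsum + 7 * hqcd
  have hcd2 : IsCoprime (c ^ 2) (d ^ 2) := hcd.pow
  have hAB : IsCoprime (d ^ 2 - 3 * c ^ 2) (d ^ 2 - 4 * c ^ 2) := by
    obtain ⟨x, y, hxy⟩ := hcd2
    exact ⟨x + 4 * y, -x - 3 * y, by linear_combination hxy⟩
  have hp0 : p ≠ 0 := by rintro rfl; simp at hp
  obtain ⟨e, he | he⟩ := Int.sq_of_isCoprime hAB hp2
  · have hB : 0 ≤ d ^ 2 - 4 * c ^ 2 := by
      by_contra! hB
      nlinarith [sq_nonneg e, pow_pos (abs_pos.mpr hp0) 2, sq_abs p]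
    obtain ⟨f, hf⟩ :=
      Int.eq_pow_of_mul_eq_pow_of_nonneg_left hAB.symm hB (by rw [mul_comm, hp2])
    have hf_odd : Odd f := (Int.odd_pow' two_ne_zero).mp
      (by rw [← hf]; simp [parity_simps, hd, show Even (4 : ℤ) by decide])
    have hfc : IsCoprime f c := by
      rw [← IsCoprime.pow_iff two_pos two_pos, ← hf]
      simpa [mul_comm, sub_eq_add_neg] using hcd2.symm.add_mul_left_left (-4)
    have hc0 : c ≠ 0 := by rintro rfl; simp at hqcd; exact hq0 hqcd
    have hcq : c.natAbs ≤ q.natAbs := by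
      rw [Int.natAbs_eq_iff_sq_eq.mpr (show q ^ 2 = (c * d) ^ 2 by rw [hqcd]; ring), Int.natAbs_mul]
      exact Nat.le_mul_of_pos_right _ (Int.natAbs_pos.mpr (by rintro rfl; simp at hd))
    exact ⟨f, c, e, d, hf_odd, hfc, hc0, hcq, by linear_combination -hf + he,
      by linear_combination -hf⟩
  · obtain ⟨⟨d', rfl⟩, ⟨e', rfl⟩⟩ :=
      Int.three_dvd_of_three_dvd_sq_add_sq (a := d) (b := e) ⟨c ^ 2, by linear_combination he⟩
    have h3c : (3 : ℤ) ∣ c :=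
      Int.prime_three.dvd_of_dvd_pow (n := 2) ⟨d' ^ 2 + e' ^ 2, by linarith⟩
    exact (Int.prime_three.not_isUnit (hcd.isUnit_of_dvd' h3c (dvd_mul_right 3 d'))).elim

theorem eq_zero_of_concordant {f c e d : ℤ} (hf : Odd f) (hfc : IsCoprime f c)
    (he : f ^ 2 + c ^ 2 = e ^ 2) (hd : f ^ 2 + 4 * c ^ 2 = d ^ 2) : c = 0 := by
  induction hN : c.natAbs using Nat.strong_induction_on generalizing f c e d with
  | _ N ih =>
  by_contra hc
  obtain ⟨m, n, hmn, hm, hn, rfl, hW⟩ := exists_sq_eq_quartic_of_concordant hf hfc he hd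
  have hn0 : n ≠ 0 := by rintro rfl; simp at hc
  obtain ⟨f', c', e', d', hf', hfc', hc', hc'n, he', hd'⟩ :=
    exists_concordant_of_sq_eq_quartic hmn hm hn hn0 hW
  have hnN : n.natAbs < N := by
    have hm0 : 0 < m.natAbs := Int.natAbs_pos.mpr (by rintro rfl; simp at hm)
    rw [← hN, Int.natAbs_mul, Int.natAbs_mul]
    have := Int.natAbs_pos.mpr hn0
    simp only [Int.reduceAbs]
    nlinarith
  exact hc' (ih _ (hc'n.trans_lt hnN) hf' hfc' he' hd' rfl)

theorem eq_zero_of_sq_eq_quartic {p q t : ℤ} (hpq : IsCoprime p q) (hp : Odd p) (hq : Even q)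
    (ht : t ^ 2 = p ^ 4 + 14 * p ^ 2 * q ^ 2 + q ^ 4) : q = 0 := by
  by_contra hq0
  obtain ⟨f, c, e, d, hf, hfc, hc, -, he, hd⟩ :=
    exists_concordant_of_sq_eq_quartic hpq hp hq hq0 ht
  exact hc (eq_zero_of_concordant hf hfc he hd)

theorem exists_sq_eq_mul_of_sq_eq_quartic_sub {u w t : ℤ} (huw : IsCoprime u w) (hu : Odd u)
    (hw0 : w ≠ 0) (ht : t ^ 2 = u ^ 4 - 4 * u ^ 2 * w ^ 2 + 16 * w ^ 4) :
    ∃ c d, IsCoprime c d ∧ w ^ 2 = c ^ 2 * d ^ 2 ∧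
      u ^ 2 = (d ^ 2 + 3 * c ^ 2) * (d ^ 2 - c ^ 2) := by
  wlog ht0 : 0 ≤ t generalizing t
  · exact this (t := -t) (by linear_combination ht) (by linarith)
  have hN_odd : Odd (u ^ 2 - 2 * w ^ 2) := by simp [parity_simps, hu, show Even (2 : ℤ) by decide]
  have ht_odd : Odd t := (Int.odd_pow' two_ne_zero).mp (by
    rw [ht]; simp [parity_simps, hu, show Even (4 : ℤ) by decide, show Even (16 : ℤ) by decide])
  obtain ⟨g, hg⟩ := ht_odd.sub_odd hN_odd
  obtain ⟨h, hh⟩ : ∃ h, h = t - g := ⟨_, rfl⟩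
  have hdiff : h - g = u ^ 2 - 2 * w ^ 2 := by linarith
  have hprod : g * h = 3 * w ^ 4 := by
    have : 4 * (g * h) = 4 * (3 * w ^ 4) := by
      rw [hh]; linear_combination ht - (t + u ^ 2 - 2 * w ^ 2 - 2 * g) * hg
    linarith
  have hgh : IsCoprime g h := by
    have hNw : IsCoprime (u ^ 2 - 2 * w ^ 2) w := by
      simpa [sub_eq_add_neg, mul_assoc, ← sq] using
        (huw.pow_left (m := 2)).add_mul_right_left (-2 * w)
    have hN3 : IsCoprime (u ^ 2 - 2 * w ^ 2) 3 := by
      refine ((Int.prime_three.coprime_iff_not_dvd).mpr fun h3 => ?_).symm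
      refine Int.not_three_dvd_sq_add_sq huw ?_
      rw [show u ^ 2 + w ^ 2 = u ^ 2 - 2 * w ^ 2 + 3 * w ^ 2 by ring]
      exact dvd_add h3 (dvd_mul_right _ _)
    obtain ⟨a, b, hab⟩ : IsCoprime (h - g) (g * h) := by
      rw [hdiff, hprod]; exact hN3.mul_right hNw.pow_right
    exact ⟨-a, a + b * g, by linear_combination hab⟩
  have hg0 : 0 < g ∧ 0 < h := by
    rcases pos_and_pos_or_neg_and_neg_of_mul_pos (hprod ▸ by positivity : 0 < g * h) with h' | h'
    · exact h'
    · linarith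
  rcases Int.prime_three.dvd_or_dvd ⟨w ^ 4, hprod⟩ with ⟨g', rfl⟩ | ⟨h', rfl⟩
  · obtain ⟨c, d, rfl, rfl, hcd, hw⟩ := Int.exists_eq_pow_four_of_mul_eq_pow_four (n := w)
      hgh.of_mul_left_right (by linarith) hg0.2.le (by linarith)
    exact ⟨c, d, hcd, hw, by linear_combination -hdiff + 2 * hw⟩
  · obtain ⟨c, d, rfl, rfl, hcd, hw⟩ := Int.exists_eq_pow_four_of_mul_eq_pow_four (n := w)
      hgh.of_mul_right_right hg0.1.le (by linarith) (by linarith)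
    obtain ⟨a, rfl⟩ := hu
    have key : ∀ a c d : ZMod 8, (2 * a + 1) ^ 2 ≠ 3 * d ^ 4 - c ^ 4 + 2 * c ^ 2 * d ^ 2 := by
      decide
    have hu2 : (2 * a + 1) ^ 2 = 3 * d ^ 4 - c ^ 4 + 2 * c ^ 2 * d ^ 2 := by
      linear_combination -hdiff + 2 * hw
    exact (key a c d (by exact_mod_cast congrArg ((↑) : ℤ → ZMod 8) hu2)).elim

theorem eq_zero_of_sq_eq_quartic_sub_of_even {u v t : ℤ} (huv : IsCoprime u v) (hu : Odd u)
    (hv : Even v) (ht : t ^ 2 = u ^ 4 - u ^ 2 * v ^ 2 + v ^ 4) : v = 0 := by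
  obtain ⟨w, rfl⟩ := hv.two_dvd
  by_contra hw0
  replace hw0 : w ≠ 0 := by rintro rfl; simp at hw0
  obtain ⟨c, d, hcd, hw, hu2⟩ := exists_sq_eq_mul_of_sq_eq_quartic_sub (t := t)
    huv.of_mul_right_right hu hw0 (by linear_combination ht)
  have hc0 : c ≠ 0 := by rintro rfl; simp at hw; exact hw0 hw
  have hB_odd : Odd (d ^ 2 - c ^ 2) := (Int.odd_mul.mp (hu2 ▸ hu.pow)).2
  have hAB : IsCoprime (d ^ 2 + 3 * c ^ 2) (d ^ 2 - c ^ 2) := by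
    obtain ⟨x, y, hxy⟩ : IsCoprime (c ^ 2) (d ^ 2) := hcd.pow
    exact IsCoprime.of_mul_add_mul_eq ((Int.isCoprime_two_left.mpr hB_odd).pow_left (m := 2))
      (x := x + y) (y := 3 * y - x) (by linear_combination 4 * hxy)
  have hA : 0 < d ^ 2 + 3 * c ^ 2 := by positivity
  obtain ⟨e, he⟩ := Int.eq_pow_of_mul_eq_pow_of_nonneg_left hAB hA.le hu2.symm
  obtain ⟨f, hf⟩ := Int.eq_pow_of_mul_eq_pow_of_nonneg_left hAB.symm
    (nonneg_of_mul_nonneg_right (hu2 ▸ sq_nonneg u) hA) (by rw [mul_comm, hu2])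
  have hf_odd : Odd f := (Int.odd_pow' two_ne_zero).mp (hf ▸ hB_odd)
  have hfc : IsCoprime f c := by
    rw [← IsCoprime.pow_iff two_pos two_pos, ← hf]
    simpa [sub_eq_add_neg] using (hcd.pow (m := 2) (n := 2)).symm.add_mul_left_left (-1)
  exact hc0 (eq_zero_of_concordant (e := d) (d := e) hf_odd hfc (by linear_combination -hf)
    (by linear_combination -hf + he))

theorem mul_eq_zero_or_sq_eq_of_sq_eq_quartic_sub {u v t : ℤ} (huv : IsCoprime u v)
    (ht : t ^ 2 = u ^ 4 - u ^ 2 * v ^ 2 + v ^ 4) : u * v = 0 ∨ u ^ 2 = v ^ 2 := by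
  rcases Int.even_or_odd u with hu | hu <;> rcases Int.even_or_odd v with hv | hv
  · exact (Int.prime_two.not_isUnit (huv.isUnit_of_dvd' hu.two_dvd hv.two_dvd)).elim
  · left
    rw [eq_zero_of_sq_eq_quartic_sub_of_even (t := t) huv.symm hv hu (by linear_combination ht),
      zero_mul]
  · left
    rw [eq_zero_of_sq_eq_quartic_sub_of_even huv hu hv ht, mul_zero]
  · right
    obtain ⟨p, huv2⟩ := hu.add_odd hv
    obtain ⟨q, rfl⟩ : ∃ q, u = p + q := ⟨u - p, by ring⟩
    obtain rfl : v = p - q := by linarith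
    have hpq : IsCoprime p q := by
      obtain ⟨a, b, hab⟩ := huv
      exact ⟨a + b, a - b, by linear_combination hab⟩
    have hW : t ^ 2 = p ^ 4 + 14 * p ^ 2 * q ^ 2 + q ^ 4 := by linear_combination ht
    rcases Int.even_or_odd q with hq | hq
    · have hp : Odd p := (Int.odd_add.mp hu).mpr hq
      rw [eq_zero_of_sq_eq_quartic hpq hp hq hW]; ring
    · have hp : Even p := Int.not_odd_iff_even.mp fun hp => Int.not_even_iff_odd.mpr hq
        ((Int.odd_add.mp hu).mp hp)
      rw [eq_zero_of_sq_eq_quartic (t := t) hpq.symm hq hp (by linear_combination hW)]; ring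

theorem exists_sq_eq_quartic_sub_of_mul_eq_sq {a b s : ℤ} (hab : IsCoprime a b) (hb : 0 < b)
    (hs : b * (a * (a ^ 2 - a * b + b ^ 2)) = s * s) :
    ∃ α β r, a = α ^ 2 ∧ b = β ^ 2 ∧ IsCoprime α β ∧ r ^ 2 = α ^ 4 - α ^ 2 * β ^ 2 + β ^ 4 := by
  have hN : 0 < a ^ 2 - a * b + b ^ 2 := by nlinarith [sq_nonneg (2 * a - b)]
  have hNa : IsCoprime (a ^ 2 - a * b + b ^ 2) a := by
    rw [show a ^ 2 - a * b + b ^ 2 = b ^ 2 + a * (a - b) by ring]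
    exact (hab.symm.pow_left (m := 2)).add_mul_left_left (a - b)
  have hNb : IsCoprime (a ^ 2 - a * b + b ^ 2) b := by
    rw [show a ^ 2 - a * b + b ^ 2 = a ^ 2 + b * (b - a) by ring]
    exact (hab.pow_left (m := 2)).add_mul_left_left (b - a)
  obtain ⟨β, rfl⟩ := Int.eq_pow_of_mul_eq_pow_of_nonneg_left (hab.symm.mul_right hNb.symm) hb.le
    (by rw [hs, sq])
  obtain ⟨r, hr⟩ := Int.eq_pow_of_mul_eq_pow_of_nonneg_left (hNb.mul_right hNa) hN.le
    (c := s) (k := 2) (by linear_combination hs)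
  have ha : 0 ≤ a := by
    refine nonneg_of_mul_nonneg_left ?_ (mul_pos hb hN)
    rw [show a * (β ^ 2 * (a ^ 2 - a * β ^ 2 + (β ^ 2) ^ 2)) = s * s by rw [← hs]; ring]
    exact mul_self_nonneg s
  obtain ⟨α, rfl⟩ := Int.eq_pow_of_mul_eq_pow_of_nonneg_left (hab.mul_right hNa.symm) ha
    (c := s) (k := 2) (by linear_combination hs)
  exact ⟨α, β, r, rfl, rfl, (IsCoprime.pow_iff two_pos two_pos).mp hab,
    by linear_combination -hr⟩

theorem eq_zero_or_eq_one_of_isSquare_cubic {x : ℚ} (hx : IsSquare (x ^ 3 - x ^ 2 + x)) :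
    x = 0 ∨ x = 1 := by
  obtain ⟨a, b, hb, hab, rfl⟩ : ∃ a b : ℤ, 0 < b ∧ IsCoprime a b ∧ x = a / b :=
    ⟨x.num, x.den, mod_cast x.den_pos, Int.isCoprime_iff_gcd_eq_one.mpr x.reduced,
      (Rat.num_div_den x).symm⟩
  obtain ⟨s, hs⟩ : IsSquare (b * (a * (a ^ 2 - a * b + b ^ 2))) := by
    rw [← Rat.isSquare_intCast_iff]
    obtain ⟨r, hr⟩ := hx
    refine ⟨r * b ^ 2, ?_⟩
    have hb0 : (b : ℚ) ≠ 0 := by positivity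
    push_cast
    field_simp at hr
    linear_combination (b : ℚ) * hr
  obtain ⟨α, β, r, rfl, rfl, hαβ, hr⟩ := exists_sq_eq_quartic_sub_of_mul_eq_sq hab hb hs
  have hβ : β ≠ 0 := by rintro rfl; simp at hb
  rcases mul_eq_zero_or_sq_eq_of_sq_eq_quartic_sub hαβ hr with h | h
  · left
    rw [(mul_eq_zero.mp h).resolve_right hβ]
    simp
  · right
    rw [h, div_self (by positivity)]

namespace E₁

open WeierstrassCurve.Affine

theorem equation_iff {x y : ℚ} : E₁.toAffine.Equation x y ↔ y ^ 2 = x ^ 3 - x ^ 2 + x := by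
  rw [WeierstrassCurve.Affine.equation_iff]
  simp only [E₁]
  constructor <;> intro h <;> linear_combination h

theorem negY_eq (x y : ℚ) : E₁.toAffine.negY x y = -y := by
  simp [negY, E₁]

theorem affine_points {x y : ℚ} (h : E₁.toAffine.Equation x y) :
    (x = 0 ∧ y = 0) ∨ (x = 1 ∧ y = 1) ∨ (x = 1 ∧ y = -1) := by
  rw [equation_iff] at h
  rcases eq_zero_or_eq_one_of_isSquare_cubic ⟨y, by rw [← h, sq]⟩ with rfl | rfl
  · exact Or.inl ⟨rfl, by simpa using h⟩
  · have hy : y * y = 1 := by rw [← sq, h]; norm_num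
    rcases mul_self_eq_one_iff.mp hy with rfl | rfl
    exacts [Or.inr (Or.inl ⟨rfl, rfl⟩), Or.inr (Or.inr ⟨rfl, rfl⟩)]

theorem nonsingular_zero_zero : E₁.toAffine.Nonsingular 0 0 := by
  rw [nonsingular_iff, equation_iff]; norm_num [E₁]

theorem nonsingular_one_one : E₁.toAffine.Nonsingular 1 1 := by
  rw [nonsingular_iff, equation_iff]; norm_num [E₁]

abbrev pointOneOne : E₁.toAffine.Point := .some 1 1 nonsingular_one_one

theorem two_nsmul_pointOneOne {h : E₁.toAffine.Nonsingular 0 0} :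
    2 • pointOneOne = .some 0 0 h := by
  have hy : (1 : ℚ) ≠ E₁.toAffine.negY 1 1 := by rw [negY_eq]; norm_num
  have hslope : E₁.toAffine.slope 1 1 1 1 = 1 := by
    rw [slope_of_Y_ne rfl hy, negY_eq]; norm_num [E₁]
  rw [two_nsmul, Point.add_self_of_Y_ne hy, Point.some.injEq, addY, negAddY, addX, hslope, negY_eq]
  norm_num [E₁]

theorem neg_pointOneOne {h : E₁.toAffine.Nonsingular 1 (-1)} : -pointOneOne = .some 1 (-1) h := by
  simp only [Point.neg_some, negY_eq]

theorem addOrderOf_pointOneOne : addOrderOf pointOneOne = 4 := by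
  have : Fact (Nat.Prime 2) := ⟨Nat.prime_two⟩
  refine addOrderOf_eq_prime_pow (p := 2) (n := 1) ?_ ?_
  · rw [pow_one, two_nsmul_pointOneOne (h := nonsingular_zero_zero)]
    exact Point.some_ne_zero _
  · rw [pow_succ, mul_nsmul, pow_one, two_nsmul_pointOneOne (h := nonsingular_zero_zero),
      two_nsmul]
    exact Point.add_of_Y_eq rfl (by rw [negY_eq]; norm_num)

theorem mem_zmultiples_pointOneOne (P : E₁.toAffine.Point) :
    P ∈ AddSubgroup.zmultiples pointOneOne := by
  rcases P with _ | ⟨x, y, h⟩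
  · exact zero_mem _
  rcases affine_points h.1 with ⟨rfl, rfl⟩ | ⟨rfl, rfl⟩ | ⟨rfl, rfl⟩
  · rw [← two_nsmul_pointOneOne]
    exact nsmul_mem (AddSubgroup.mem_zmultiples _) 2
  · exact AddSubgroup.mem_zmultiples _
  · rw [← neg_pointOneOne]
    exact neg_mem (AddSubgroup.mem_zmultiples _)

theorem card_point : Nat.card E₁.toAffine.Point = 4 :=
  (addOrderOf_eq_card_of_forall_mem_zmultiples mem_zmultiples_pointOneOne).symm.trans
    addOrderOf_pointOneOne

end E₁

theorem E1_rational_points :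
    (∀ P : E₁.toAffine.Point,
      P = 0 ∨
      (∃ h : E₁.toAffine.Nonsingular 0 0, P = WeierstrassCurve.Affine.Point.some _ _ h) ∨
      (∃ h : E₁.toAffine.Nonsingular 1 1, P = WeierstrassCurve.Affine.Point.some _ _ h) ∨
      (∃ h : E₁.toAffine.Nonsingular 1 (-1), P = WeierstrassCurve.Affine.Point.some _ _ h)) ∧
    Nonempty (E₁.toAffine.Point ≃+ ZMod 4) := by
  refine ⟨?_, ⟨(zmodAddEquivOfGenerator E₁.mem_zmultiples_pointOneOne E₁.card_point).symm⟩⟩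
  rintro (_ | ⟨x, y, h⟩)
  · exact Or.inl rfl
  rcases E₁.affine_points h.1 with ⟨rfl, rfl⟩ | ⟨rfl, rfl⟩ | ⟨rfl, rfl⟩
  exacts [Or.inr (Or.inl ⟨h, rfl⟩), Or.inr (Or.inr (Or.inl ⟨h, rfl⟩)),
    Or.inr (Or.inr (Or.inr ⟨h, rfl⟩))]
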